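/- arXiv:1901.11339 — 8 statements merged into one kernel-verified Lean document; each statement's English description precedes it below -/
import Mathlib

section
/- The Petersen graph GP(5,2) admits a red-blue vertex coloring such that every blue component is an isolated vertex or a single edge, and every red component is a star with 1, 2, or 3 edges (i.e., the red subgraph has minimum degree at least 1 and contains no path with 3 edges). -/
def GP (n k : ℕ) : SimpleGraph (Bool × ZMod n) :=
  SimpleGraph.fromRel (fun a b =>
    (a.1 = false ∧ b.1 = false ∧ b.2 = a.2 + 1) ∨
    (a.1 = false ∧ b.1 = true ∧ a.2 = b.2) ∨
    (a.1 = true ∧ b.1 = true ∧ b.2 = a.2 + (k : ZMod n)))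

/-- A crumby coloring: `red v = true` means `v` is red. Blue components are
isolated vertices or single edges (blue induced max degree ≤ 1); the red induced
subgraph has min degree ≥ 1 and contains no path with 3 edges, i.e. every red
component is a star with 1, 2 or 3 edges. -/
def Crumby {V : Type*} (G : SimpleGraph V) (red : V → Bool) : Prop :=
  (∀ v, red v = false → {w | G.Adj v w ∧ red w = false}.Subsingleton) ∧
  (∀ v, red v = true → ∃ w, G.Adj v w ∧ red w = true) ∧
  ¬ ∃ a b c d : V, red a = true ∧ red b = true ∧ red c = true ∧ red d = true ∧
      a ≠ b ∧ a ≠ c ∧ a ≠ d ∧ b ≠ c ∧ b ≠ d ∧ c ≠ d ∧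
      G.Adj a b ∧ G.Adj b c ∧ G.Adj c d

instance : DecidableRel (GP 5 2).Adj := fun a b => by
  unfold GP; simp [SimpleGraph.fromRel_adj]; infer_instance

/-- The Petersen graph GP(5,2) admits a crumby coloring. -/
theorem petersen_crumby : ∃ red : Bool × ZMod 5 → Bool, Crumby (GP 5 2) red := by
  use fun v => match v with
    | (false, 0) => false
    | (false, 1) => true
    | (false, 2) => false
    | (false, 3) => true
    | (false, 4) => true
    | (true, 0) => true
    | (true, 1) => true
    | (true, 2) => true
    | (true, 3) => false
    | (true, 4) => false
  unfold Crumby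
  refine ⟨?_, ?_, ?_⟩
  · intro v hv x hx y hy
    simp only [Set.mem_setOf_eq] at hx hy
    revert hv hx hy; revert x y v; decide
  · decide
  · decide
end

section
/- For every integer k ≥ 2, the generalized Petersen graph GP(2k+1, k) admits a red-blue vertex coloring in which every blue component is an isolated vertex or an edge and every red component is a star with 1, 2, or 3 edges. -/
/-!
Since `2k ≡ -1 (mod 2k+1)`, multiplying indices by `-2` and swapping the two layers is an
isomorphism `GP(2k+1, k) ≅ GP(2k+1, 2)`, so it suffices to colour `GP(n, 2)`, which we do for
every `n ≥ 5` other than `8`. Its outer cycle `i ~ i + 1` and inner cycle `i ~ i + 2` are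
coloured with a pattern of period 5, corrected on a final block of length `5 + n % 5`
(`n = 9` gets a pattern of its own). Every red edge then has an endpoint whose only red
neighbour is the other endpoint, which rules out red paths with three edges. Each local
condition involves positions at cyclic distance at most 4 and is decided by linear arithmetic.
-/

section Crumby

variable {V W : Type*} {G : SimpleGraph V}

theorem Crumby.comp_iso {H : SimpleGraph W} (e : G ≃g H) {red : W → Bool} (h : Crumby H red) :
    Crumby G (red ∘ e) := by
  obtain ⟨hblue, hred, hpath⟩ := h
  refine ⟨fun v hv w₁ hw₁ w₂ hw₂ => e.injective (hblue (e v) hv ?_ ?_),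
    fun v hv => ?_, ?_⟩
  · exact ⟨e.map_adj_iff.2 hw₁.1, hw₁.2⟩
  · exact ⟨e.map_adj_iff.2 hw₂.1, hw₂.2⟩
  · obtain ⟨w, hvw, hw⟩ := hred (e v) hv
    exact ⟨e.symm w, by simpa using e.symm.map_adj_iff.2 hvw, by simpa using hw⟩
  · rintro ⟨a, b, c, d, ra, rb, rc, rd, hab, hac, had, hbc, hbd, hcd, h₁, h₂, h₃⟩
    exact hpath ⟨e a, e b, e c, e d, ra, rb, rc, rd, e.injective.ne hab, e.injective.ne hac,
      e.injective.ne had, e.injective.ne hbc, e.injective.ne hbd, e.injective.ne hcd,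
      e.map_adj_iff.2 h₁, e.map_adj_iff.2 h₂, e.map_adj_iff.2 h₃⟩

variable {red : V → Bool}

def OnlyRedNeighbor (G : SimpleGraph V) (red : V → Bool) (v w : V) : Prop :=
  ∀ u, G.Adj v u → red u = true → u = w

theorem Crumby.of_onlyRedNeighbor
    (hblue : ∀ v, red v = false → {w | G.Adj v w ∧ red w = false}.Subsingleton)
    (hred : ∀ v, red v = true → ∃ w, G.Adj v w ∧ red w = true)
    (hedge : ∀ v w, G.Adj v w → red v = true → red w = true →
      OnlyRedNeighbor G red v w ∨ OnlyRedNeighbor G red w v) :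
    Crumby G red := by
  refine ⟨hblue, hred, ?_⟩
  rintro ⟨a, b, c, d, ra, rb, rc, rd, -, hac, -, -, hbd, -, hab, hbc, hcd⟩
  rcases hedge b c hbc rb rc with hb | hc
  · exact hac (hb a hab.symm ra)
  · exact hbd (hc d hcd rd).symm

variable {v a b c : V}

theorem subsingleton_blue_of_adj_three (hadj : ∀ w, G.Adj v w → w = a ∨ w = b ∨ w = c)
    (h : (red a ∨ red b) ∧ (red a ∨ red c) ∧ (red b ∨ red c)) :
    {w | G.Adj v w ∧ red w = false}.Subsingleton := by
  rintro w₁ ⟨h₁, c₁⟩ w₂ ⟨h₂, c₂⟩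
  rcases hadj _ h₁ with rfl | rfl | rfl <;> rcases hadj _ h₂ with rfl | rfl | rfl <;> simp_all

theorem exists_red_adj_of_three (ha : G.Adj v a) (hb : G.Adj v b) (hc : G.Adj v c)
    (h : red a ∨ red b ∨ red c) : ∃ w, G.Adj v w ∧ red w = true := by
  rcases h with h | h | h
  exacts [⟨a, ha, h⟩, ⟨b, hb, h⟩, ⟨c, hc, h⟩]

theorem onlyRedNeighbor_of_adj_three (hadj : ∀ u, G.Adj v u → u = c ∨ u = a ∨ u = b)
    (ha : red a = false) (hb : red b = false) : OnlyRedNeighbor G red v c := by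
  intro u hu hr
  rcases hadj u hu with rfl | rfl | rfl <;> simp_all

end Crumby

namespace GP

variable {n k l : ℕ}

theorem adj_false_iff {i : ZMod n} {w : Bool × ZMod n} :
    (GP n l).Adj (false, i) w ↔
      (false, i) ≠ w ∧ (w = (false, i + 1) ∨ w = (false, i - 1) ∨ w = (true, i)) := by
  obtain ⟨_ | _, j⟩ := w <;> simp [GP, eq_sub_iff_add_eq, eq_comm (a := i)]

theorem adj_true_iff {i : ZMod n} {w : Bool × ZMod n} :
    (GP n l).Adj (true, i) w ↔
      (true, i) ≠ w ∧ (w = (true, i + l) ∨ w = (true, i - l) ∨ w = (false, i)) := by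
  obtain ⟨_ | _, j⟩ := w <;> simp [GP, eq_sub_iff_add_eq, eq_comm (a := i)]

-- `m = ±l` turns outer edges into inner edges of `GP n l`, and `m * k = ±1` turns inner edges
-- into outer ones.
theorem adj_swap {m : ZMod n} (hm : m = l ∨ m = -l) (hmk : m * k = 1 ∨ m * k = -1)
    {v w : Bool × ZMod n} (h : (GP n k).Adj v w) :
    (GP n l).Adj (!v.1, m * v.2) (!w.1, m * w.2) := by
  have hm_unit : IsUnit m := by
    rcases hmk with h | h
    · exact IsUnit.of_mul_eq_one _ h
    · exact IsUnit.of_mul_eq_one (-k : ZMod n) (by rw [mul_neg, h, neg_neg])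
  obtain ⟨a, i⟩ := v
  obtain ⟨b, j⟩ := w
  simp only [GP, SimpleGraph.fromRel_adj, ne_eq, Prod.mk.injEq, Bool.not_inj_iff] at h ⊢
  refine ⟨fun ⟨hab, hij⟩ => h.1 ⟨hab, hm_unit.mul_left_cancel hij⟩, ?_⟩
  rcases h.2 with (⟨rfl, rfl, rfl⟩ | ⟨rfl, rfl, rfl⟩ | ⟨rfl, rfl, rfl⟩) |
      (⟨rfl, rfl, rfl⟩ | ⟨rfl, rfl, rfl⟩ | ⟨rfl, rfl, rfl⟩) <;>
    rcases hm with rfl | rfl <;> rcases hmk with hmk | hmk <;> grind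

def layerSwap (m m' : ZMod n) (h : m' * m = 1) : Bool × ZMod n ≃ Bool × ZMod n where
  toFun v := (!v.1, m * v.2)
  invFun v := (!v.1, m' * v.2)
  left_inv v := by simp [← mul_assoc, h]
  right_inv v := by simp [← mul_assoc, mul_comm m m', h]

-- With `ε = k * l = ±1` the map is `(b, i) ↦ (!b, ε * l * i)`; its inverse multiplies by `k`.
def swapIso (hkl : (k * l : ZMod n) = 1 ∨ (k * l : ZMod n) = -1) : GP n k ≃g GP n l :=
  have hsq : (k * l : ZMod n) * (k * l) = 1 := by rcases hkl with h | h <;> simp [h]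
  have hinv (x : ZMod n) : k * (k * l * l * x) = x := by linear_combination x * hsq
  { toEquiv := layerSwap (k * l * l) k (by linear_combination hsq)
    map_rel_iff' := fun {v w} =>
      ⟨fun h => by simpa [layerSwap, hinv] using adj_swap (Or.inl rfl) hkl h,
        adj_swap (by rcases hkl with h | h <;> simp [h]) (Or.inl (by linear_combination hsq))⟩ }

end GP

theorem ZMod.val_add_eq_or_val_add_add_eq {n : ℕ} [NeZero n] (a b : ZMod n) :
    (a + b).val = a.val + b.val ∨ (a + b).val + n = a.val + b.val := by
  rcases lt_or_ge (a.val + b.val) n with h | h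
  · exact .inl (ZMod.val_add_of_lt h)
  · exact .inr (ZMod.val_add_val_of_le h).symm

namespace GPTwo

-- The colour of position `x < n` on the outer (step 1) and inner (step 2) cycle of `GP n 2`.
-- For `n ≠ 9`, the positions below `n - 5 - n % 5` (a multiple of 5) follow a pattern in `x % 5`,
-- and the remaining `5 + n % 5` positions form a final block in which `x` sits at position
-- `x + 5 + n % 5 - n`.
def outerTail : ℕ → Finset ℕ
  | 0 | 1 => {1, 2, 4}
  | 2 => {1, 2, 5}
  | 3 => {2, 3, 6}
  | _ => {2, 3, 4, 7}

def innerTail : ℕ → Finset ℕ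
  | 0 => {0, 3, 4}
  | 1 => {0, 3, 4, 5}
  | 2 => {0, 3, 4, 5, 6}
  | 3 => {0, 1, 4, 5, 6, 7}
  | _ => {0, 1, 5, 6, 7, 8}

def outerRed (n x : ℕ) : Prop :=
  if n = 9 then x ∈ ({1, 2, 3, 5, 8} : Finset ℕ)
  else if x + 5 + n % 5 < n then x % 5 ∈ ({1, 2, 4} : Finset ℕ)
  else x + 5 + n % 5 - n ∈ outerTail (n % 5)

def innerRed (n x : ℕ) : Prop :=
  if n = 9 then x ∈ ({2, 5, 6, 7, 8} : Finset ℕ)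
  else if x + 5 + n % 5 < n then x % 5 ∈ ({0, 3, 4} : Finset ℕ)
  else x + 5 + n % 5 - n ∈ innerTail (n % 5)

instance (n x : ℕ) : Decidable (outerRed n x) := by unfold outerRed; infer_instance

instance (n x : ℕ) : Decidable (innerRed n x) := by unfold innerRed; infer_instance

section LocalRules

-- For positions below `n`, `y = x + s ∨ y + n = x + s` says that `y ≡ x + s [MOD n]`.

variable {n x y z u w : ℕ}

theorem two_red_neighbors_of_not_outerRed (hn : 5 ≤ n) (h8 : n ≠ 8)
    (hx : x < n) (hy : y < n) (hz : z < n)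
    (hxy : y = x + 1 ∨ y + n = x + 1) (hzx : x = z + 1 ∨ x + n = z + 1) (h : ¬ outerRed n x) :
    (outerRed n y ∨ outerRed n z) ∧ (outerRed n y ∨ innerRed n x) ∧
      (outerRed n z ∨ innerRed n x) := by
  casesm* _ ∨ _ <;> subst_vars <;>
    simp only [outerRed, innerRed] at * <;>
    generalize hr : n % 5 = r at * <;>
    have : r < 5 := hr ▸ Nat.mod_lt _ (by norm_num) <;>
    interval_cases r <;>
    simp only [outerTail, innerTail, Finset.mem_insert, Finset.mem_singleton] at * <;>
    grind (splits := 20)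

theorem two_red_neighbors_of_not_innerRed (hn : 5 ≤ n) (h8 : n ≠ 8)
    (hx : x < n) (hy : y < n) (hz : z < n)
    (hxy : y = x + 2 ∨ y + n = x + 2) (hzx : x = z + 2 ∨ x + n = z + 2) (h : ¬ innerRed n x) :
    (innerRed n y ∨ innerRed n z) ∧ (innerRed n y ∨ outerRed n x) ∧
      (innerRed n z ∨ outerRed n x) := by
  casesm* _ ∨ _ <;> subst_vars <;>
    simp only [outerRed, innerRed] at * <;>
    generalize hr : n % 5 = r at * <;>
    have : r < 5 := hr ▸ Nat.mod_lt _ (by norm_num) <;>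
    interval_cases r <;>
    simp only [outerTail, innerTail, Finset.mem_insert, Finset.mem_singleton] at * <;>
    grind (splits := 20)

theorem red_neighbor_of_outerRed (hn : 5 ≤ n) (h8 : n ≠ 8)
    (hx : x < n) (hy : y < n) (hz : z < n)
    (hxy : y = x + 1 ∨ y + n = x + 1) (hzx : x = z + 1 ∨ x + n = z + 1) (h : outerRed n x) :
    outerRed n y ∨ outerRed n z ∨ innerRed n x := by
  casesm* _ ∨ _ <;> subst_vars <;>
    simp only [outerRed, innerRed] at * <;>
    generalize hr : n % 5 = r at * <;>
    have : r < 5 := hr ▸ Nat.mod_lt _ (by norm_num) <;>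
    interval_cases r <;>
    simp only [outerTail, innerTail, Finset.mem_insert, Finset.mem_singleton] at * <;>
    grind (splits := 20)

theorem red_neighbor_of_innerRed (hn : 5 ≤ n) (h8 : n ≠ 8)
    (hx : x < n) (hy : y < n) (hz : z < n)
    (hxy : y = x + 2 ∨ y + n = x + 2) (hzx : x = z + 2 ∨ x + n = z + 2) (h : innerRed n x) :
    innerRed n y ∨ innerRed n z ∨ outerRed n x := by
  casesm* _ ∨ _ <;> subst_vars <;>
    simp only [outerRed, innerRed] at * <;>
    generalize hr : n % 5 = r at * <;>
    have : r < 5 := hr ▸ Nat.mod_lt _ (by norm_num) <;>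
    interval_cases r <;>
    simp only [outerTail, innerTail, Finset.mem_insert, Finset.mem_singleton] at * <;>
    grind (splits := 20)

theorem outer_edge_has_leaf (hn : 5 ≤ n) (h8 : n ≠ 8)
    (hx : x < n) (hy : y < n) (hz : z < n) (hw : w < n)
    (hxy : y = x + 1 ∨ y + n = x + 1) (hwx : x = w + 1 ∨ x + n = w + 1)
    (hzy : z = y + 1 ∨ z + n = y + 1) (h : outerRed n x) (h' : outerRed n y) :
    (¬ outerRed n w ∧ ¬ innerRed n x) ∨ (¬ outerRed n z ∧ ¬ innerRed n y) := by
  casesm* _ ∨ _ <;> subst_vars <;>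
    simp only [outerRed, innerRed] at * <;>
    generalize hr : n % 5 = r at * <;>
    have : r < 5 := hr ▸ Nat.mod_lt _ (by norm_num) <;>
    interval_cases r <;>
    simp only [outerTail, innerTail, Finset.mem_insert, Finset.mem_singleton] at * <;>
    grind (splits := 20)

theorem inner_edge_has_leaf (hn : 5 ≤ n) (h8 : n ≠ 8)
    (hx : x < n) (hy : y < n) (hz : z < n) (hw : w < n)
    (hxy : y = x + 2 ∨ y + n = x + 2) (hwx : x = w + 2 ∨ x + n = w + 2)
    (hzy : z = y + 2 ∨ z + n = y + 2) (h : innerRed n x) (h' : innerRed n y) :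
    (¬ innerRed n w ∧ ¬ outerRed n x) ∨ (¬ innerRed n z ∧ ¬ outerRed n y) := by
  casesm* _ ∨ _ <;> subst_vars <;>
    simp only [outerRed, innerRed] at * <;>
    generalize hr : n % 5 = r at * <;>
    have : r < 5 := hr ▸ Nat.mod_lt _ (by norm_num) <;>
    interval_cases r <;>
    simp only [outerTail, innerTail, Finset.mem_insert, Finset.mem_singleton] at * <;>
    grind (splits := 20)

theorem spoke_has_leaf (hn : 5 ≤ n) (h8 : n ≠ 8)
    (hx : x < n) (hy : y < n) (hz : z < n) (hu : u < n) (hw : w < n)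
    (hxy : y = x + 1 ∨ y + n = x + 1) (hzx : x = z + 1 ∨ x + n = z + 1)
    (hxu : u = x + 2 ∨ u + n = x + 2) (hwx : x = w + 2 ∨ x + n = w + 2)
    (h : outerRed n x) (h' : innerRed n x) :
    (¬ outerRed n y ∧ ¬ outerRed n z) ∨ (¬ innerRed n u ∧ ¬ innerRed n w) := by
  casesm* _ ∨ _ <;> subst_vars <;>
    simp only [outerRed, innerRed] at * <;>
    generalize hr : n % 5 = r at * <;>
    have : r < 5 := hr ▸ Nat.mod_lt _ (by norm_num) <;>
    interval_cases r <;>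
    simp only [outerTail, innerTail, Finset.mem_insert, Finset.mem_singleton] at * <;>
    grind (splits := 20)

end LocalRules

def coloring (n : ℕ) : Bool × ZMod n → Bool
  | (false, i) => decide (outerRed n i.val)
  | (true, i) => decide (innerRed n i.val)

section Coloring

variable {n : ℕ} [NeZero n]

theorem val_add_one_eq_or (hn : 5 ≤ n) (i : ZMod n) :
    (i + 1).val = i.val + 1 ∨ (i + 1).val + n = i.val + 1 := by
  simpa [ZMod.val_one'' (show n ≠ 1 by omega)] using ZMod.val_add_eq_or_val_add_add_eq i 1

theorem val_add_two_eq_or (hn : 5 ≤ n) (i : ZMod n) :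
    (i + 2).val = i.val + 2 ∨ (i + 2).val + n = i.val + 2 := by
  simpa [ZMod.val_ofNat_of_lt (show 2 < n by omega)] using
    ZMod.val_add_eq_or_val_add_add_eq i 2

theorem val_sub_one_eq_or (hn : 5 ≤ n) (i : ZMod n) :
    i.val = (i - 1).val + 1 ∨ i.val + n = (i - 1).val + 1 := by
  simpa using val_add_one_eq_or hn (i - 1)

theorem val_sub_two_eq_or (hn : 5 ≤ n) (i : ZMod n) :
    i.val = (i - 2).val + 2 ∨ i.val + n = (i - 2).val + 2 := by
  simpa using val_add_two_eq_or hn (i - 2)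

theorem coloring_blue (hn : 5 ≤ n) (h8 : n ≠ 8) (v : Bool × ZMod n)
    (hv : coloring n v = false) :
    {w | (GP n 2).Adj v w ∧ coloring n w = false}.Subsingleton := by
  obtain ⟨_ | _, i⟩ := v
  · refine subsingleton_blue_of_adj_three (fun w h => (GP.adj_false_iff.1 h).2) ?_
    simpa [coloring] using two_red_neighbors_of_not_outerRed hn h8 (ZMod.val_lt i)
      (ZMod.val_lt _) (ZMod.val_lt _) (val_add_one_eq_or hn i) (val_sub_one_eq_or hn i)
      (by simpa [coloring] using hv)
  · refine subsingleton_blue_of_adj_three (fun w h => (GP.adj_true_iff.1 h).2) ?_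
    simpa [coloring] using two_red_neighbors_of_not_innerRed hn h8 (ZMod.val_lt i)
      (ZMod.val_lt _) (ZMod.val_lt _) (val_add_two_eq_or hn i) (val_sub_two_eq_or hn i)
      (by simpa [coloring] using hv)

theorem coloring_exists_red_adj (hn : 5 ≤ n) (h8 : n ≠ 8) (v : Bool × ZMod n)
    (hv : coloring n v = true) : ∃ w, (GP n 2).Adj v w ∧ coloring n w = true := by
  have h1 : (1 : ZMod n) ≠ 0 := fun h => by
    simpa [ZMod.val_one'' (show n ≠ 1 by omega)] using congrArg ZMod.val h
  have h2 : (2 : ZMod n) ≠ 0 := fun h => by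
    simpa [ZMod.val_ofNat_of_lt (show 2 < n by omega)] using congrArg ZMod.val h
  obtain ⟨_ | _, i⟩ := v
  · refine exists_red_adj_of_three (GP.adj_false_iff.2 ⟨by simp [h1], .inl rfl⟩)
      (GP.adj_false_iff.2 ⟨by simp [eq_comm (a := i), h1], .inr (.inl rfl)⟩)
      (GP.adj_false_iff.2 ⟨by simp, .inr (.inr rfl)⟩) ?_
    simpa [coloring] using red_neighbor_of_outerRed hn h8 (ZMod.val_lt i) (ZMod.val_lt _)
      (ZMod.val_lt _) (val_add_one_eq_or hn i) (val_sub_one_eq_or hn i)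
      (by simpa [coloring] using hv)
  · refine exists_red_adj_of_three (GP.adj_true_iff.2 ⟨by simp [h2], .inl rfl⟩)
      (GP.adj_true_iff.2 ⟨by simp [eq_comm (a := i), h2], .inr (.inl rfl)⟩)
      (GP.adj_true_iff.2 ⟨by simp, .inr (.inr rfl)⟩) ?_
    simpa [coloring] using red_neighbor_of_innerRed hn h8 (ZMod.val_lt i) (ZMod.val_lt _)
      (ZMod.val_lt _) (val_add_two_eq_or hn i) (val_sub_two_eq_or hn i)
      (by simpa [coloring] using hv)

theorem coloring_outer_edge (hn : 5 ≤ n) (h8 : n ≠ 8) (i : ZMod n)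
    (hv : coloring n (false, i) = true) (hw : coloring n (false, i + 1) = true) :
    OnlyRedNeighbor (GP n 2) (coloring n) (false, i) (false, i + 1) ∨
      OnlyRedNeighbor (GP n 2) (coloring n) (false, i + 1) (false, i) := by
  rcases outer_edge_has_leaf hn h8 (ZMod.val_lt i) (ZMod.val_lt (i + 1))
    (ZMod.val_lt (i + 1 + 1)) (ZMod.val_lt (i - 1)) (val_add_one_eq_or hn i)
    (val_sub_one_eq_or hn i) (val_add_one_eq_or hn (i + 1))
    (by simpa [coloring] using hv) (by simpa [coloring] using hw)
    with ⟨h₁, h₂⟩ | ⟨h₁, h₂⟩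
  · exact .inl (onlyRedNeighbor_of_adj_three (fun u hu => (GP.adj_false_iff.1 hu).2)
      (a := (false, i - 1)) (b := (true, i)) (by simpa [coloring]) (by simpa [coloring]))
  · refine .inr (onlyRedNeighbor_of_adj_three (fun u hu => ?_)
      (a := (false, i + 1 + 1)) (b := (true, i + 1)) (by simpa [coloring]) (by simpa [coloring]))
    rcases (GP.adj_false_iff.1 hu).2 with rfl | rfl | rfl <;> simp

theorem coloring_inner_edge (hn : 5 ≤ n) (h8 : n ≠ 8) (i : ZMod n)
    (hv : coloring n (true, i) = true) (hw : coloring n (true, i + 2) = true) :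
    OnlyRedNeighbor (GP n 2) (coloring n) (true, i) (true, i + 2) ∨
      OnlyRedNeighbor (GP n 2) (coloring n) (true, i + 2) (true, i) := by
  rcases inner_edge_has_leaf hn h8 (ZMod.val_lt i) (ZMod.val_lt (i + 2))
    (ZMod.val_lt (i + 2 + 2)) (ZMod.val_lt (i - 2)) (val_add_two_eq_or hn i)
    (val_sub_two_eq_or hn i) (val_add_two_eq_or hn (i + 2))
    (by simpa [coloring] using hv) (by simpa [coloring] using hw)
    with ⟨h₁, h₂⟩ | ⟨h₁, h₂⟩
  · refine .inl (onlyRedNeighbor_of_adj_three (fun u hu => ?_)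
      (a := (true, i - 2)) (b := (false, i)) (by simpa [coloring]) (by simpa [coloring]))
    simpa using (GP.adj_true_iff.1 hu).2
  · refine .inr (onlyRedNeighbor_of_adj_three (fun u hu => ?_)
      (a := (true, i + 2 + 2)) (b := (false, i + 2)) (by simpa [coloring]) (by simpa [coloring]))
    rcases (GP.adj_true_iff.1 hu).2 with rfl | rfl | rfl <;> simp

theorem coloring_spoke (hn : 5 ≤ n) (h8 : n ≠ 8) (i : ZMod n)
    (hv : coloring n (false, i) = true) (hw : coloring n (true, i) = true) :
    OnlyRedNeighbor (GP n 2) (coloring n) (false, i) (true, i) ∨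
      OnlyRedNeighbor (GP n 2) (coloring n) (true, i) (false, i) := by
  rcases spoke_has_leaf hn h8 (ZMod.val_lt i) (ZMod.val_lt (i + 1)) (ZMod.val_lt (i - 1))
    (ZMod.val_lt (i + 2)) (ZMod.val_lt (i - 2)) (val_add_one_eq_or hn i)
    (val_sub_one_eq_or hn i) (val_add_two_eq_or hn i) (val_sub_two_eq_or hn i)
    (by simpa [coloring] using hv) (by simpa [coloring] using hw)
    with ⟨h₁, h₂⟩ | ⟨h₁, h₂⟩
  · refine .inl (onlyRedNeighbor_of_adj_three (fun u hu => ?_)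
      (a := (false, i + 1)) (b := (false, i - 1)) (by simpa [coloring]) (by simpa [coloring]))
    rcases (GP.adj_false_iff.1 hu).2 with rfl | rfl | rfl <;> simp
  · refine .inr (onlyRedNeighbor_of_adj_three (fun u hu => ?_)
      (a := (true, i + 2)) (b := (true, i - 2)) (by simpa [coloring]) (by simpa [coloring]))
    rcases (GP.adj_true_iff.1 hu).2 with rfl | rfl | rfl <;> simp

theorem coloring_red_edge (hn : 5 ≤ n) (h8 : n ≠ 8) (v w : Bool × ZMod n)
    (hvw : (GP n 2).Adj v w) (hv : coloring n v = true) (hw : coloring n w = true) :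
    OnlyRedNeighbor (GP n 2) (coloring n) v w ∨ OnlyRedNeighbor (GP n 2) (coloring n) w v := by
  obtain ⟨a, i⟩ := v
  obtain ⟨b, j⟩ := w
  rw [GP, SimpleGraph.fromRel_adj] at hvw
  rcases hvw.2 with (⟨rfl, rfl, rfl⟩ | ⟨rfl, rfl, rfl⟩ | ⟨rfl, rfl, rfl⟩) |
    (⟨rfl, rfl, rfl⟩ | ⟨rfl, rfl, rfl⟩ | ⟨rfl, rfl, rfl⟩)
  · exact coloring_outer_edge hn h8 i hv hw
  · exact coloring_spoke hn h8 _ hv hw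
  · exact coloring_inner_edge hn h8 i hv hw
  · exact (coloring_outer_edge hn h8 j hw hv).symm
  · exact (coloring_spoke hn h8 _ hw hv).symm
  · exact (coloring_inner_edge hn h8 j hw hv).symm

end Coloring

theorem crumby_coloring {n : ℕ} (hn : 5 ≤ n) (h8 : n ≠ 8) : Crumby (GP n 2) (coloring n) :=
  have : NeZero n := ⟨by omega⟩
  Crumby.of_onlyRedNeighbor (coloring_blue hn h8) (coloring_exists_red_adj hn h8)
    (coloring_red_edge hn h8)

end GPTwo

/-- For every k ≥ 2, the generalized Petersen graph GP(2k+1, k) has a crumby coloring. -/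
theorem GP_odd_crumby (k : ℕ) (hk : 2 ≤ k) :
    ∃ red : Bool × ZMod (2 * k + 1) → Bool, Crumby (GP (2 * k + 1) k) red := by
  have hk2 : (k : ZMod (2 * k + 1)) * (2 : ℕ) = -1 := by
    have := ZMod.natCast_self (2 * k + 1)
    push_cast at this ⊢
    linear_combination this
  exact ⟨_, (GPTwo.crumby_coloring (by omega) (by omega)).comp_iso (GP.swapIso (.inr hk2))⟩
end

section
/- For every integer k ≥ 2, the generalized Petersen graph GP(4k, 2k-1) admits a red-blue vertex coloring in which every blue component is an isolated vertex or an edge and every red component is a star with 1, 2, or 3 edges. -/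
/-- For every k ≥ 2, the generalized Petersen graph GP(4k, 2k-1) has a crumby coloring. -/
theorem GP_even_crumby (k : ℕ) (hk : 2 ≤ k) :
    ∃ red : Bool × ZMod (4 * k) → Bool, Crumby (GP (4 * k) (2 * k - 1)) red := by
  have h2 : (2 : ℕ) ∣ 4 * k := ⟨2 * k, by ring⟩
  let φ : ZMod (4 * k) →+* ZMod 2 := ZMod.castHom h2 (ZMod 2)
  have hm : ((2 * k - 1 : ℕ) : ZMod 2) = 1 := by
    have h1 : 1 ≤ 2 * k := by omega
    rw [Nat.cast_sub h1, Nat.cast_mul, CharP.cast_eq_zero, zero_mul, zero_sub]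
    decide
  have two : ∀ x : ZMod 2, x = 0 ∨ x = 1 := by decide
  have add11 : ∀ x : ZMod 2, x + 1 + 1 = x := by decide
  have hne01 : (0 : ZMod 2) ≠ 1 := by decide
  -- key lemma: every edge either flips parity or is a spoke
  have key : ∀ (b : Bool) (i : ZMod (4 * k)) (c : Bool) (j : ZMod (4 * k)),
      (GP (4 * k) (2 * k - 1)).Adj (b, i) (c, j) →
      φ j = φ i + 1 ∨ (c = !b ∧ j = i) := by
    intro b i c j hadj
    rw [GP, SimpleGraph.fromRel_adj] at hadj
    obtain ⟨hne, h | h⟩ := hadj <;>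
      rcases h with ⟨h1, h2', h3⟩ | ⟨h1, h2', h3⟩ | ⟨h1, h2', h3⟩ <;>
      simp only [] at h1 h2' h3
    · left; rw [h3, map_add, map_one]
    · right; subst h1 h2'; exact ⟨rfl, h3.symm⟩
    · left; rw [h3, map_add, map_natCast, hm]
    · left
      have h4 : φ i = φ j + 1 := by rw [h3, map_add, map_one]
      rw [h4, add11]
    · right; subst h1 h2'; exact ⟨rfl, h3⟩
    · left
      have h4 : φ i = φ j + 1 := by rw [h3, map_add, map_natCast, hm]
      rw [h4, add11]
  -- spokes are edges
  have spoke : ∀ (b : Bool) (i : ZMod (4 * k)),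
      (GP (4 * k) (2 * k - 1)).Adj (b, i) (!b, i) := by
    intro b i
    rw [GP, SimpleGraph.fromRel_adj]
    cases b <;> simp
  refine ⟨fun p => decide (φ p.2 = 0), ?_, ?_, ?_⟩
  · rintro ⟨b, i⟩ hv
    have hi : φ i = 1 := by
      rcases two (φ i) with h | h
      · simp [h] at hv
      · exact h
    have uniq : ∀ w, (GP (4 * k) (2 * k - 1)).Adj (b, i) w →
        (decide (φ w.2 = 0) = false) → w = (!b, i) := by
      rintro ⟨c, j⟩ hadj hw
      have hj : φ j = 1 := by
        rcases two (φ j) with h | h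
        · simp [h] at hw
        · exact h
      rcases key b i c j hadj with h | ⟨h1, h2'⟩
      · rw [hj, hi] at h
        exact absurd h.symm (by decide)
      · rw [h1, h2']
    intro w hw w' hw'
    simp only [Set.mem_setOf_eq] at hw hw'
    rw [uniq w hw.1 hw.2, uniq w' hw'.1 hw'.2]
  · rintro ⟨b, i⟩ hv
    refine ⟨(!b, i), spoke b i, hv⟩
  · rintro ⟨a, b, c, d, ha, hb, hc, hd, hab, hac, had, hbc, hbd, hcd, e1, e2, e3⟩
    obtain ⟨a1, a2⟩ := a; obtain ⟨b1, b2⟩ := b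
    obtain ⟨c1, c2⟩ := c; obtain ⟨d1, d2⟩ := d
    have ha' : φ a2 = 0 := of_decide_eq_true ha
    have hb' : φ b2 = 0 := of_decide_eq_true hb
    have hc' : φ c2 = 0 := of_decide_eq_true hc
    have hA : (a1, a2) = (!b1, b2) := by
      rcases key b1 b2 a1 a2 e1.symm with h | ⟨h1, h2'⟩
      · rw [ha', hb'] at h; exact absurd h (by decide)
      · rw [h1, h2']
    have hC : (c1, c2) = (!b1, b2) := by
      rcases key b1 b2 c1 c2 e2 with h | ⟨h1, h2'⟩
      · rw [hc', hb'] at h; exact absurd h (by decide)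
      · rw [h1, h2']
    exact hac (hA.trans hC.symm)
end

section
/- Every tree with maximum degree at most 3 admits a red-blue vertex coloring such that every blue component is an isolated vertex or an edge, and every red component is a star with 1, 2, or 3 edges. -/
/-!
Root the tree at a leaf, so that every vertex has at most two children, and describe a coloring by
giving every vertex one of five roles, recording its color and how its blue edge or red star
continues below it. The coloring is crumby as soon as every role fits the multiset of roles of the
children and the root is not a `pendant`, because all the conditions of `Crumby` are local.

Such labellings are found by dynamic programming. Call a set of roles viable if it contains
`pendant` together with `blue` or `center`, or a blue role together with `center` or `apex`.
A finite check shows that if every child of a vertex with at most two children can take the roles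
of a viable set, then the roles the vertex itself can take form a viable set. So, from the leaves
up, every vertex gets a viable set of roles. A viable set always has a role other than `pendant`,
and from a role at the root the labelling is chosen from the root down.
-/

open Finset

theorem Finset.eq_of_count_map_le_one {α β : Type*} [DecidableEq β] {S : Finset α} {f : α → β}
    {b : β} (h : (S.val.map f).count b ≤ 1) {x y : α} (hx : x ∈ S) (hy : y ∈ S) (hfx : f x = b)
    (hfy : f y = b) : x = y := by
  rw [Multiset.count_map] at h
  have h' : #(S.filter (b = f ·)) ≤ 1 := h
  exact card_le_one.1 h' x (by simp [hx, hfx]) y (by simp [hy, hfy])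

namespace SimpleGraph

variable {V : Type*}

/-- The depth only witnesses that iterating the parent map reaches the root. -/
structure Rooting (G : SimpleGraph V) where
  root : V
  parent : V → V
  depth : V → ℕ
  depth_parent_lt : ∀ v, v ≠ root → depth (parent v) < depth v
  adj_iff : ∀ {v w}, G.Adj v w ↔ v ≠ root ∧ parent v = w ∨ w ≠ root ∧ parent w = v

namespace Rooting

variable {G : SimpleGraph V} (R : G.Rooting) {v w : V}

def IsChild (v c : V) : Prop := c ≠ R.root ∧ R.parent c = v

lemma adj_iff_isChild : G.Adj v w ↔ R.IsChild w v ∨ R.IsChild v w := R.adj_iff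

lemma isChild_parent (hv : v ≠ R.root) : R.IsChild (R.parent v) v := ⟨hv, rfl⟩

variable {R} in
lemma IsChild.eq_parent (h : R.IsChild v w) : v = R.parent w := h.2.symm

variable {R} in
lemma IsChild.depth_lt (h : R.IsChild v w) : R.depth v < R.depth w :=
  h.2 ▸ R.depth_parent_lt w h.1

variable [Fintype V]

open Classical in
noncomputable def children (v : V) : Finset V := {c | R.IsChild v c}

@[simp]
lemma mem_children : w ∈ R.children v ↔ R.IsChild v w := by
  simp [children]

lemma card_children_le : #(R.children v) ≤ (G.neighborSet v).ncard := by
  rw [← Set.ncard_coe_finset]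
  exact Set.ncard_le_ncard (fun w hw => R.adj_iff_isChild.2 (.inr (R.mem_children.1 hw)))

lemma card_children_lt (hv : v ≠ R.root) : #(R.children v) < (G.neighborSet v).ncard := by
  classical
  have hp : R.parent v ∉ R.children v := fun h =>
    (R.isChild_parent hv).depth_lt.not_gt (R.mem_children.1 h).depth_lt
  rw [Nat.lt_iff_add_one_le, ← card_insert_of_notMem hp, ← Set.ncard_coe_finset]
  refine Set.ncard_le_ncard fun w hw => ?_
  simp only [coe_insert, Set.mem_insert_iff, mem_coe, mem_children] at hw
  rcases hw with rfl | hw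
  exacts [R.adj_iff_isChild.2 (.inl (R.isChild_parent hv)), R.adj_iff_isChild.2 (.inr hw)]

end Rooting

variable {G : SimpleGraph V} {r u v w : V}

lemma Connected.exists_adj_dist_eq_add_one (hG : G.Connected) (hv : v ≠ r) :
    ∃ u, G.Adj u v ∧ G.dist r v = G.dist r u + 1 := by
  obtain ⟨p, -, hp⟩ := hG.exists_path_of_dist v r
  have hnil : ¬p.Nil := p.not_nil_of_ne hv
  refine ⟨p.snd, (p.adj_snd hnil).symm, ?_⟩
  have hle : G.dist p.snd r ≤ p.length - 1 := p.length_tail ▸ dist_le p.tail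
  have := (p.adj_snd hnil).diff_dist_adj (u := r)
  have := hG.pos_dist_of_ne hv.symm
  rw [dist_comm] at hle hp
  omega

/-- Such a neighbor is the penultimate vertex of every shortest path from `r` to `v`. -/
lemma IsAcyclic.eq_of_adj_of_dist_eq_add_one (hG : G.IsAcyclic) (hu : G.Adj u v)
    (hdu : G.dist r v = G.dist r u + 1) (hw : G.Adj w v) (hdw : G.dist r v = G.dist r w + 1) :
    u = w := by
  classical
  have hrv : G.Reachable r v := Reachable.of_dist_ne_zero (by omega)
  obtain ⟨q, hq, -⟩ := hrv.exists_path_of_dist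
  suffices ∀ x, G.Adj x v → G.dist r v = G.dist r x + 1 → x = q.penultimate from
    (this u hu hdu).trans (this w hw hdw).symm
  intro x hx hdx
  refine hG.eq_penultimate_of_adj_end hq hx.symm ?_
  by_contra hxq
  obtain ⟨p, hp, hpl⟩ := (hrv.trans hx.symm.reachable).exists_path_of_dist
  have hvp := hG.mem_support_of_ne_mem_support_of_adj_of_isPath hp hq hx hxq
  have := (dist_le (p.takeUntil v hvp)).trans (p.length_takeUntil_le_length hvp)
  omega

lemma IsTree.exists_rooting (hG : G.IsTree) (r : V) : ∃ R : G.Rooting, R.root = r := by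
  classical
  choose par hpar using fun v : {v // v ≠ r} => hG.connected.exists_adj_dist_eq_add_one v.2
  let parent v := if hv : v = r then r else par ⟨v, hv⟩
  have hparent : ∀ v, v ≠ r → G.Adj (parent v) v ∧ G.dist r v = G.dist r (parent v) + 1 :=
    fun v hv => by simpa [parent, hv] using hpar ⟨v, hv⟩
  have hchild {u v} (huv : G.Adj u v) (hd : G.dist r v = G.dist r u + 1) :
      v ≠ r ∧ parent v = u := by
    have hv : v ≠ r := by rintro rfl; simp at hd
    exact ⟨hv, hG.isAcyclic.eq_of_adj_of_dist_eq_add_one (hparent v hv).1 (hparent v hv).2 huv hd⟩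
  refine ⟨⟨r, parent, G.dist r, fun v hv => by have := (hparent v hv).2; omega, ?_⟩, rfl⟩
  intro v w
  constructor
  · intro h
    rcases hG.dist_eq_dist_add_one_of_adj r h with hd | hd
    exacts [.inl (hchild h.symm hd), .inr (hchild h hd)]
  · rintro (⟨hv, rfl⟩ | ⟨hw, rfl⟩)
    exacts [(hparent v hv).1.symm, (hparent w hw).1]

lemma IsTree.exists_ncard_neighborSet_le_one [Fintype V] (hG : G.IsTree) :
    ∃ r, (G.neighborSet r).ncard ≤ 1 := by
  classical
  rcases subsingleton_or_nontrivial V with hV | hV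
  · obtain ⟨r⟩ := hG.connected.nonempty
    exact ⟨r, Set.ncard_le_one_iff_subsingleton.2 Set.subsingleton_of_subsingleton⟩
  · obtain ⟨r, hr⟩ := hG.exists_vert_degree_one_of_nontrivial
    exact ⟨r, (Set.ncard_eq_toFinset_card' _).trans_le hr.le⟩

end SimpleGraph

namespace Crumby

/-- The role of a vertex of a rooted tree in a coloring: `blue` is blue without blue children,
`blueAbove` is blue with one blue child; `pendant` is a leaf of the red star centered at its parent,
`apex` is a leaf of the red star centered at its only red child, and a `center` has the `pendant`s
among its children and possibly an `apex` parent as the other vertices of its star. -/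
inductive Role
  | blue
  | blueAbove
  | pendant
  | center
  | apex
  deriving DecidableEq

namespace Role

instance : Fintype Role :=
  ⟨{blue, blueAbove, pendant, center, apex}, fun s => by cases s <;> decide⟩

def isRed : Role → Bool
  | blue | blueAbove => false
  | pendant | center | apex => true

def childRoles : Role → Finset Role
  | blue => {center, apex}
  | blueAbove => {blue, center, apex}
  | pendant => {blue, blueAbove}
  | center => {pendant, blue, blueAbove}
  | apex => {center, blue, blueAbove}

def Demand : Role → Multiset Role → Prop
  | blueAbove, m => m.count blue = 1
  | center, m => pendant ∈ m
  | apex, m => m.count center = 1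
  | blue, _ | pendant, _ => True

instance (s : Role) (m : Multiset Role) : Decidable (s.Demand m) := by
  cases s <;> unfold Demand <;> infer_instance

def Fits (s : Role) (m : Multiset Role) : Prop :=
  (∀ t ∈ m, t ∈ s.childRoles) ∧ s.Demand m

instance (s : Role) (m : Multiset Role) : Decidable (s.Fits m) := by
  unfold Fits; infer_instance

lemma eq_blueAbove_of_mem_childRoles : ∀ {s t : Role}, t ∈ s.childRoles → s.isRed = false →
    t.isRed = false → s = blueAbove ∧ t = blue := by
  decide

lemma eq_center_or_eq_apex_of_mem_childRoles : ∀ {s t : Role}, t ∈ s.childRoles →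
    s.isRed = true → t.isRed = true → s = center ∧ t = pendant ∨ s = apex ∧ t = center := by
  decide

lemma eq_center_of_pendant_mem_childRoles : ∀ {s : Role}, pendant ∈ s.childRoles → s = center := by
  decide

end Role

open Role

def Viable (A : Finset Role) : Prop :=
  pendant ∈ A ∧ (blue ∈ A ∨ center ∈ A) ∨ (blue ∈ A ∨ blueAbove ∈ A) ∧ (center ∈ A ∨ apex ∈ A)

instance (A : Finset Role) : Decidable (Viable A) := by
  unfold Viable; infer_instance

lemma Viable.mono {A B : Finset Role} (hAB : A ⊆ B) (hA : Viable A) : Viable B :=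
  hA.imp (.imp (@hAB _) (.imp (@hAB _) (@hAB _)))
    (.imp (.imp (@hAB _) (@hAB _)) (.imp (@hAB _) (@hAB _)))

def viableBases : Finset (Finset Role) :=
  {{pendant, blue}, {pendant, center}, {blue, center}, {blue, apex}, {blueAbove, center},
    {blueAbove, apex}}

lemma Viable.exists_base {A : Finset Role} (hA : Viable A) : ∃ B ∈ viableBases, B ⊆ A := by
  rcases hA with ⟨h, h' | h'⟩ | ⟨h | h, h' | h'⟩ <;>
    exact ⟨_, by simp [viableBases], insert_subset h (singleton_subset_iff.2 h')⟩

lemma Viable.exists_ne_pendant {A : Finset Role} (hA : Viable A) : ∃ s ∈ A, s ≠ pendant := by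
  rcases hA with ⟨-, h | h⟩ | ⟨-, h | h⟩ <;> exact ⟨_, h, by decide⟩

lemma viable_fits_zero : Viable {s | s.Fits 0} := by
  decide

lemma viable_fits_singleton : ∀ B ∈ viableBases, Viable {s | ∃ x ∈ B, s.Fits {x}} := by
  decide

lemma viable_fits_pair :
    ∀ B ∈ viableBases, ∀ B' ∈ viableBases, Viable {s | ∃ x ∈ B, ∃ y ∈ B', s.Fits {x, y}} := by
  decide

section Compatible

variable {V : Type*}

open Classical in
noncomputable def compatibleRoles (S : Finset V) (A : V → Finset Role) : Finset Role :=
  {s | ∃ σ : V → Role, (∀ c ∈ S, σ c ∈ A c) ∧ s.Fits (S.val.map σ)}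

lemma mem_compatibleRoles {S : Finset V} {A : V → Finset Role} {s : Role} :
    s ∈ compatibleRoles S A ↔ ∃ σ : V → Role, (∀ c ∈ S, σ c ∈ A c) ∧ s.Fits (S.val.map σ) := by
  simp [compatibleRoles]

lemma compatibleRoles_congr {S : Finset V} {A A' : V → Finset Role} (h : ∀ c ∈ S, A c = A' c) :
    compatibleRoles S A = compatibleRoles S A' := by
  ext s
  simp only [mem_compatibleRoles]
  exact exists_congr fun σ => and_congr_left' (forall₂_congr fun c hc => by rw [h c hc])

lemma viable_compatibleRoles {S : Finset V} {A : V → Finset Role} (hS : #S ≤ 2)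
    (hA : ∀ c ∈ S, Viable (A c)) : Viable (compatibleRoles S A) := by
  classical
  interval_cases h : #S
  · rw [card_eq_zero.1 h]
    refine viable_fits_zero.mono fun s hs => mem_compatibleRoles.2 ⟨fun _ => blue, by simp, ?_⟩
    simpa using hs
  · obtain ⟨a, rfl⟩ := card_eq_one.1 h
    obtain ⟨B, hB, hBA⟩ := (hA a (mem_singleton_self a)).exists_base
    refine (viable_fits_singleton B hB).mono fun s hs => ?_
    obtain ⟨x, hx, hsx⟩ := (mem_filter.1 hs).2
    exact mem_compatibleRoles.2 ⟨fun _ => x, by simpa using hBA hx, by simpa using hsx⟩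
  · obtain ⟨a, b, hab, rfl⟩ := card_eq_two.1 h
    obtain ⟨B, hB, hBA⟩ := (hA a (by simp)).exists_base
    obtain ⟨B', hB', hBA'⟩ := (hA b (by simp)).exists_base
    refine (viable_fits_pair B hB B' hB').mono fun s hs => ?_
    obtain ⟨x, hx, y, hy, hsxy⟩ := (mem_filter.1 hs).2
    refine mem_compatibleRoles.2 ⟨fun c => if c = a then x else y, ?_, ?_⟩
    · simp [hab.symm, hBA hx, hBA' hy]
    · simpa [hab, hab.symm] using hsxy

end Compatible

section Labelling

variable {V : Type*} [Fintype V] {G : SimpleGraph V} {R : G.Rooting} {L : V → Role}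
  (hL : ∀ v, (L v).Fits ((R.children v).val.map L))
include hL

lemma role_mem_childRoles {v c : V} (h : R.IsChild v c) : L c ∈ (L v).childRoles :=
  (hL v).1 _ (Multiset.mem_map_of_mem L (R.mem_children.2 h))

lemma blue_neighbors_subsingleton {v : V} (hv : (L v).isRed = false) :
    {w | G.Adj v w ∧ (L w).isRed = false}.Subsingleton := by
  rintro w ⟨hvw, hw⟩ w' ⟨hvw', hw'⟩
  rcases R.adj_iff_isChild.1 hvw with hp | hc <;> rcases R.adj_iff_isChild.1 hvw' with hp' | hc'
  · rw [hp.eq_parent, hp'.eq_parent]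
  · exact absurd ((eq_blueAbove_of_mem_childRoles (role_mem_childRoles hL hp) hw hv).2.symm.trans
      (eq_blueAbove_of_mem_childRoles (role_mem_childRoles hL hc') hv hw').1) (by decide)
  · exact absurd ((eq_blueAbove_of_mem_childRoles (role_mem_childRoles hL hp') hw' hv).2.symm.trans
      (eq_blueAbove_of_mem_childRoles (role_mem_childRoles hL hc) hv hw).1) (by decide)
  · obtain ⟨hvb, hwb⟩ := eq_blueAbove_of_mem_childRoles (role_mem_childRoles hL hc) hv hw
    have hcount : ((R.children v).val.map L).count blue = 1 := by
      have := hL v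
      rw [hvb] at this
      exact this.2
    exact eq_of_count_map_le_one hcount.le (R.mem_children.2 hc) (R.mem_children.2 hc') hwb
      (eq_blueAbove_of_mem_childRoles (role_mem_childRoles hL hc') hv hw').2

lemma exists_red_neighbor (hroot : L R.root ≠ pendant) {v : V} (hv : (L v).isRed = true) :
    ∃ w, G.Adj v w ∧ (L w).isRed = true := by
  have hchild : ∀ t ∈ (R.children v).val.map L, t.isRed = true →
      ∃ w, G.Adj v w ∧ (L w).isRed = true := by
    intro t ht htr
    obtain ⟨c, hc, rfl⟩ := Multiset.mem_map.1 ht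
    exact ⟨c, R.adj_iff_isChild.2 (.inr (R.mem_children.1 hc)), htr⟩
  have hfits := hL v
  cases hLv : L v
  case blue | blueAbove => simp [hLv, isRed] at hv
  case pendant =>
    have hvr : v ≠ R.root := by rintro rfl; exact hroot hLv
    have hp := eq_center_of_pendant_mem_childRoles
      (hLv ▸ role_mem_childRoles hL (R.isChild_parent hvr))
    exact ⟨R.parent v, R.adj_iff_isChild.2 (.inl (R.isChild_parent hvr)), by simp [hp, isRed]⟩
  case center =>
    rw [hLv] at hfits
    exact hchild pendant hfits.2 rfl
  case apex =>
    rw [hLv] at hfits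
    have hcount : ((R.children v).val.map L).count center = 1 := hfits.2
    exact hchild center (Multiset.count_pos.1 (by omega)) rfl

lemma center_iff_of_isChild_of_isRed {v c : V} (h : R.IsChild v c) (hv : (L v).isRed = true)
    (hc : (L c).isRed = true) : L v = center ↔ L c ≠ center := by
  rcases eq_center_or_eq_apex_of_mem_childRoles (role_mem_childRoles hL h) hv hc with
    ⟨hv', hc'⟩ | ⟨hv', hc'⟩ <;> simp [hv', hc']

lemma center_iff_of_adj_of_isRed {v w : V} (h : G.Adj v w) (hv : (L v).isRed = true)
    (hw : (L w).isRed = true) : L v = center ↔ L w ≠ center := by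
  rcases R.adj_iff_isChild.1 h with h | h
  · have := center_iff_of_isChild_of_isRed hL h hw hv
    tauto
  · exact center_iff_of_isChild_of_isRed hL h hv hw

lemma red_neighbors_subsingleton {v : V} (hv : (L v).isRed = true) (hvc : L v ≠ center) :
    {w | G.Adj v w ∧ (L w).isRed = true}.Subsingleton := by
  have hparent {w} (h : R.IsChild w v) (hw : (L w).isRed = true) : L v = pendant := by
    rcases eq_center_or_eq_apex_of_mem_childRoles (role_mem_childRoles hL h) hw hv with
      ⟨-, h⟩ | ⟨-, h⟩
    exacts [h, absurd h hvc]
  have hchild {w} (h : R.IsChild v w) (hw : (L w).isRed = true) : L v = apex ∧ L w = center := by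
    rcases eq_center_or_eq_apex_of_mem_childRoles (role_mem_childRoles hL h) hv hw with
      ⟨h, -⟩ | h
    exacts [absurd h hvc, h]
  rintro w ⟨hvw, hw⟩ w' ⟨hvw', hw'⟩
  rcases R.adj_iff_isChild.1 hvw with hp | hc <;> rcases R.adj_iff_isChild.1 hvw' with hp' | hc'
  · rw [hp.eq_parent, hp'.eq_parent]
  · exact absurd ((hparent hp hw).symm.trans (hchild hc' hw').1) (by decide)
  · exact absurd ((hparent hp' hw').symm.trans (hchild hc hw).1) (by decide)
  · obtain ⟨hva, hwc⟩ := hchild hc hw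
    have hcount : ((R.children v).val.map L).count center = 1 := by
      have := hL v
      rw [hva] at this
      exact this.2
    exact eq_of_count_map_le_one hcount.le (R.mem_children.2 hc) (R.mem_children.2 hc') hwc
      (hchild hc' hw').2

lemma not_exists_red_path : ¬ ∃ a b c d : V, (L a).isRed = true ∧ (L b).isRed = true ∧
    (L c).isRed = true ∧ (L d).isRed = true ∧ a ≠ b ∧ a ≠ c ∧ a ≠ d ∧ b ≠ c ∧ b ≠ d ∧ c ≠ d ∧
    G.Adj a b ∧ G.Adj b c ∧ G.Adj c d := by
  rintro ⟨a, b, c, d, ha, hb, hc, hd, -, hac, -, -, hbd, -, hab, hbc, hcd⟩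
  by_cases hbC : L b = center
  · have hcC := (center_iff_of_adj_of_isRed hL hbc hb hc).1 hbC
    exact hbd (red_neighbors_subsingleton hL hc hcC ⟨hbc.symm, hb⟩ ⟨hcd, hd⟩)
  · exact hac (red_neighbors_subsingleton hL hb hbC ⟨hab.symm, ha⟩ ⟨hbc, hc⟩)

theorem crumby_of_fits (hroot : L R.root ≠ pendant) : Crumby G fun v => (L v).isRed :=
  ⟨fun _ => blue_neighbors_subsingleton hL, fun _ => exists_red_neighbor hL hroot,
    not_exists_red_path hL⟩

end Labelling

section Existence

variable {V : Type*} [Fintype V] {G : SimpleGraph V} (R : G.Rooting)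

lemma exists_viable_options (hch : ∀ v, #(R.children v) ≤ 2) :
    ∃ A : V → Finset Role, ∀ v, A v = compatibleRoles (R.children v) A ∧ Viable (A v) := by
  classical
  obtain ⟨N, hN⟩ : ∃ N, ∀ v, R.depth v < N :=
    ⟨univ.sup R.depth + 1, fun v => Nat.lt_succ_of_le (le_sup (mem_univ v))⟩
  have hlt {v c} (hc : c ∈ R.children v) : N - R.depth c < N - R.depth v := by
    have := (R.mem_children.1 hc).depth_lt
    have := hN c
    omega
  let wf := (measure fun v => N - R.depth v).wf
  let A := wf.fix fun v IH =>
    compatibleRoles (R.children v) fun c => if hc : c ∈ R.children v then IH c (hlt hc) else ∅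
  have hA (v) : A v = compatibleRoles (R.children v) A :=
    (wf.fix_eq _ v).trans (compatibleRoles_congr fun c hc => dif_pos hc)
  refine ⟨A, fun v => ⟨hA v, ?_⟩⟩
  induction v using wf.induction with
  | _ v IH => rw [hA v]; exact viable_compatibleRoles (hch v) fun c hc => IH c (hlt hc)

lemma exists_fits_labelling {A : V → Finset Role}
    (hA : ∀ v, A v = compatibleRoles (R.children v) A) {s₀ : Role} (hs₀ : s₀ ∈ A R.root) :
    ∃ L : V → Role, L R.root = s₀ ∧ ∀ v, (L v).Fits ((R.children v).val.map L) := by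
  classical
  have hwitness (v s) : ∃ σ : V → Role, s ∈ A v →
      (∀ c ∈ R.children v, σ c ∈ A c) ∧ s.Fits ((R.children v).val.map σ) := by
    by_cases hs : s ∈ A v
    · obtain ⟨σ, hσ⟩ := mem_compatibleRoles.1 (hA v ▸ hs)
      exact ⟨σ, fun _ => hσ⟩
    · exact ⟨fun _ => s, fun h => absurd h hs⟩
  choose σ hσ using hwitness
  let wf := (measure R.depth).wf
  let L := wf.fix fun v IH =>
    if hv : v = R.root then s₀ else σ (R.parent v) (IH (R.parent v) (R.depth_parent_lt v hv)) v
  have hL (v) : L v = if hv : v = R.root then s₀ else σ (R.parent v) (L (R.parent v)) v :=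
    wf.fix_eq _ v
  have hLA (v) : L v ∈ A v := by
    induction v using wf.induction with
    | _ v IH =>
      rw [hL v]
      split_ifs with hv
      · exact hv ▸ hs₀
      · exact (hσ _ _ (IH _ (R.depth_parent_lt v hv))).1 v (R.mem_children.2 (R.isChild_parent hv))
  refine ⟨L, by simp [hL], fun v => ?_⟩
  have hmap : (R.children v).val.map L = (R.children v).val.map (σ v (L v)) :=
    Multiset.map_congr rfl fun c hc => by
      obtain ⟨hcr, rfl⟩ := R.mem_children.1 hc
      rw [hL c, dif_neg hcr]
  rw [hmap]
  exact (hσ v (L v) (hLA v)).2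

end Existence

end Crumby

/-- Every subcubic tree has a crumby coloring. -/
theorem subcubic_tree_crumby {V : Type*} [Fintype V] (G : SimpleGraph V)
    (hconn : G.Connected) (hacyc : G.IsAcyclic)
    (hdeg : ∀ v, (G.neighborSet v).ncard ≤ 3) :
    ∃ red : V → Bool, Crumby G red := by
  have hG : G.IsTree := ⟨hconn, hacyc⟩
  obtain ⟨r, hr⟩ := hG.exists_ncard_neighborSet_le_one
  obtain ⟨R, rfl⟩ := hG.exists_rooting r
  have hch (v) : #(R.children v) ≤ 2 := by
    by_cases hv : v = R.root
    · exact hv ▸ R.card_children_le.trans (hr.trans one_le_two)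
    · have := R.card_children_lt hv
      have := hdeg v
      omega
  obtain ⟨A, hA⟩ := Crumby.exists_viable_options R hch
  obtain ⟨s₀, hs₀, hs₀p⟩ := (hA R.root).2.exists_ne_pendant
  obtain ⟨L, hLr, hL⟩ := Crumby.exists_fits_labelling R (fun v => (hA v).1) hs₀
  exact ⟨_, Crumby.crumby_of_fits hL (hLr ▸ hs₀p)⟩
end

section
/- Every graph with maximum degree at most 3 admits a red-blue vertex coloring such that the blue-induced subgraph has maximum degree at most 1 and the red-induced subgraph has maximum degree at most 1 (i.e., both color classes induce a matching plus isolated vertices). -/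
/-!
Choose a colouring minimising the number of monochromatic edges. If some vertex `v` had two
neighbours of its own colour, then, having at most three neighbours, it would have more neighbours
of its own colour than of the other one, and recolouring `v` would decrease the number of
monochromatic edges.
-/

open Finset

namespace SimpleGraph

variable {V : Type*} [Fintype V] (G : SimpleGraph V) [DecidableRel G.Adj]

-- Each monochromatic edge is counted twice, once per orientation.
def monoPairs (c : V → Bool) : Finset (V × V) :=
  univ.filter fun p => G.Adj p.1 p.2 ∧ c p.1 = c p.2

def sameColorNeighborFinset (c : V → Bool) (v : V) : Finset V :=
  (G.neighborFinset v).filter fun w => c w = c v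

variable {G}

theorem mem_monoPairs {c : V → Bool} {p : V × V} :
    p ∈ G.monoPairs c ↔ G.Adj p.1 p.2 ∧ c p.1 = c p.2 := by
  simp [monoPairs]

theorem mem_sameColorNeighborFinset {c : V → Bool} {v w : V} :
    w ∈ G.sameColorNeighborFinset c v ↔ G.Adj v w ∧ c w = c v := by
  simp [sameColorNeighborFinset]

variable [DecidableEq V]

theorem card_monoPairs (c : V → Bool) (v : V) :
    #(G.monoPairs c) =
      #((G.monoPairs c).filter fun p => p.1 ≠ v ∧ p.2 ≠ v) +
        2 * #(G.sameColorNeighborFinset c v) := by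
  set N := G.sameColorNeighborFinset c v
  have h_through_v : (G.monoPairs c).filter (fun p => ¬(p.1 ≠ v ∧ p.2 ≠ v)) =
      {v} ×ˢ N ∪ N ×ˢ {v} := by
    ext ⟨a, b⟩
    simp only [mem_filter, mem_monoPairs, mem_union, mem_product, mem_singleton,
      mem_sameColorNeighborFinset, N]
    grind [G.adj_comm]
  have h_disj : Disjoint ({v} ×ˢ N) (N ×ˢ {v}) := by
    simp only [Finset.disjoint_left, mem_product, mem_singleton]
    rintro ⟨a, b⟩ ⟨rfl, -⟩ ⟨ha, -⟩
    exact G.loopless.irrefl _ (mem_sameColorNeighborFinset.mp ha).1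
  rw [← card_filter_add_card_filter_not (s := G.monoPairs c) (p := fun p => p.1 ≠ v ∧ p.2 ≠ v),
    h_through_v, card_union_of_disjoint h_disj, card_product, card_product]
  simp only [card_singleton]
  ring

theorem filter_monoPairs_update (c : V → Bool) (v : V) (b : Bool) :
    (G.monoPairs (Function.update c v b)).filter (fun p => p.1 ≠ v ∧ p.2 ≠ v) =
      (G.monoPairs c).filter (fun p => p.1 ≠ v ∧ p.2 ≠ v) := by
  ext ⟨x, y⟩
  simp only [mem_filter, mem_monoPairs, and_congr_left_iff, and_imp]
  intro hx hy
  rw [Function.update_of_ne hx, Function.update_of_ne hy]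

theorem card_sameColorNeighborFinset_update_not_add (c : V → Bool) (v : V) :
    #(G.sameColorNeighborFinset (Function.update c v (!c v)) v) +
      #(G.sameColorNeighborFinset c v) = G.degree v := by
  have h_flip : G.sameColorNeighborFinset (Function.update c v (!c v)) v =
      (G.neighborFinset v).filter fun w => ¬c w = c v := by
    ext w
    simp only [mem_sameColorNeighborFinset, mem_filter, mem_neighborFinset, and_congr_right_iff]
    intro hvw
    rw [Function.update_of_ne hvw.ne', Function.update_self]
    cases c w <;> cases c v <;> decide
  rw [h_flip, add_comm, sameColorNeighborFinset, card_filter_add_card_filter_not,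
    card_neighborFinset_eq_degree]

theorem card_monoPairs_update_not_lt {c : V → Bool} {v : V}
    (hv : G.degree v < 2 * #(G.sameColorNeighborFinset c v)) :
    #(G.monoPairs (Function.update c v (!c v))) < #(G.monoPairs c) := by
  have h_split := card_sameColorNeighborFinset_update_not_add (G := G) c v
  rw [card_monoPairs _ v, card_monoPairs c v, filter_monoPairs_update]
  omega

end SimpleGraph

/-- Every subcubic graph has a 2-coloring such that both color classes induce
subgraphs of maximum degree at most 1 (a matching plus isolated vertices). -/
theorem subcubic_two_matchings {V : Type*} [Fintype V] (G : SimpleGraph V)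
    (hdeg : ∀ v, (G.neighborSet v).ncard ≤ 3) :
    ∃ c : V → Bool, ∀ v, {w | G.Adj v w ∧ c w = c v}.Subsingleton := by
  classical
  obtain ⟨c, hc⟩ := Finite.exists_min fun c : V → Bool => #(G.monoPairs c)
  refine ⟨c, fun v => ?_⟩
  have h_set : {w | G.Adj v w ∧ c w = c v} = G.sameColorNeighborFinset c v := by
    ext w
    simp [SimpleGraph.mem_sameColorNeighborFinset]
  have h_deg : G.degree v ≤ 3 := by
    simpa [← SimpleGraph.coe_neighborFinset, Set.ncard_coe_finset] using hdeg v
  rw [h_set, ← card_le_one_iff_subsingleton]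
  by_contra! h_two
  exact (hc _).not_gt (SimpleGraph.card_monoPairs_update_not_lt (v := v) (by omega))
end

section
/- If a cubic graph G admits a red-blue induced perfect matching, then the number of vertices of G is divisible by 4. -/
/-
Each vertex has exactly one neighbour of its own colour and hence, the graph being cubic, exactly
two of the other colour. So the red–blue edges form a 2-regular bipartite graph between the red
class R and the blue class B, which forces |R| = |B|. The red edges form a perfect matching of R,
so |R| is even and |V| = 2|R| is divisible by 4.
-/

open Finset SimpleGraph

namespace SimpleGraph

variable {V : Type*} (G : SimpleGraph V)

theorem even_card_of_existsUnique_adj_mem {s : Finset V}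
    (hs : ∀ v ∈ s, ∃! w, G.Adj v w ∧ w ∈ s) : Even #s := by
  have hM : (⊤ : (G.induce (s : Set V)).Subgraph).IsPerfectMatching := by
    refine Subgraph.isPerfectMatching_iff.mpr fun ⟨v, hv⟩ => ?_
    obtain ⟨w, ⟨hvw, hw⟩, huniq⟩ := hs v hv
    exact ⟨⟨w, hw⟩, hvw, fun u hvu => Subtype.ext (huniq u ⟨hvu, u.2⟩)⟩
  simpa using hM.even_card

variable [Fintype V] [DecidableRel G.Adj]

theorem degree_between_compl_add_one [DecidableEq V] {s : Finset V} {v : V}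
    (hv : ∃! w, G.Adj v w ∧ (w ∈ s ↔ v ∈ s)) : (G.between s sᶜ).degree v + 1 = G.degree v := by
  have hcross : (G.between s sᶜ).neighborFinset v =
      ({w | G.Adj v w ∧ ¬(w ∈ s ↔ v ∈ s)} : Finset V) := by
    ext w
    simp only [mem_neighborFinset, between_adj, Set.mem_compl_iff, mem_coe, mem_filter, mem_univ,
      true_and]
    tauto
  have hsame : #{w | G.Adj v w ∧ (w ∈ s ↔ v ∈ s)} = 1 := (Fintype.existsUnique_iff_card_one _).mp hv
  rw [← card_neighborFinset_eq_degree, ← card_neighborFinset_eq_degree, hcross, ← hsame,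
    neighborFinset_eq_filter, ← filter_filter, ← filter_filter, add_comm,
    card_filter_add_card_filter_not]

variable {G} in
theorem IsBipartiteWith.card_eq_of_isRegularOfDegree {s t : Finset V} {d : ℕ}
    (h : G.IsBipartiteWith s t) (hreg : G.IsRegularOfDegree d) (hd : d ≠ 0) : #s = #t := by
  have := isBipartiteWith_sum_degrees_eq h
  simp only [hreg.degree_eq, sum_const, smul_eq_mul] at this
  exact Nat.eq_of_mul_eq_mul_right (Nat.pos_of_ne_zero hd) this

end SimpleGraph

/-- If a cubic graph admits a red-blue induced perfect matching, then its number of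
vertices is divisible by 4. -/
theorem cubic_induced_pm_card_div_four {V : Type*} [Fintype V] (G : SimpleGraph V)
    (hcubic : ∀ v, (G.neighborSet v).ncard = 3)
    (h : ∃ c : V → Bool, ∀ v, ∃! w, G.Adj v w ∧ c w = c v) :
    4 ∣ Fintype.card V := by
  classical
  obtain ⟨c, hc⟩ := h
  let red : Finset V := {v | c v = true}
  have hsame (v : V) : ∃! w, G.Adj v w ∧ (w ∈ red ↔ v ∈ red) := by
    refine existsUnique_congr (fun w => and_congr_right' ?_) |>.mp (hc v)
    simp only [red, mem_filter, mem_univ, true_and]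
    exact Bool.eq_iff_iff
  have hdeg : ∀ v, G.degree v = 3 := fun v => by
    rw [← hcubic v, ← card_neighborSet_eq_degree, ← Nat.card_eq_fintype_card, Nat.card_coe_set_eq]
  have hcross : (G.between red redᶜ).IsRegularOfDegree 2 := fun v => by
    have := G.degree_between_compl_add_one (hsame v)
    rw [hdeg v] at this
    omega
  have hbip : (G.between red redᶜ).IsBipartiteWith red ↑redᶜ := by
    simpa using between_isBipartiteWith disjoint_compl_right
  have hbalanced : #red = #redᶜ := hbip.card_eq_of_isRegularOfDegree hcross two_ne_zero
  obtain ⟨k, hk⟩ : Even #red :=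
    G.even_card_of_existsUnique_adj_mem fun v hv => by simpa [hv] using hsame v
  rw [← card_add_card_compl red, ← hbalanced, hk]
  omega
end

section
/- The graph H obtained from K_{3,3} by adding a handle (the unique such graph other than the Wagner graph, on 8 vertices) has, up to automorphism, a unique perfect matching, and its four perfect matching edges are pairwise joined by an edge of H; consequently H admits no red-blue induced perfect matching. -/
/-!
A perfect matching of `Hgraph` is an involution `f` with `v ~ f v` for all `v`. Running through
the `3 ^ 8` choices of a neighbour for every vertex leaves six involutions, and these are the
conjugates of `{05, 13, 24, 67}` by six automorphisms of `Hgraph`; this gives uniqueness up to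
automorphism, and the six matchings are checked directly to have their edges pairwise joined.

If a colouring `c` makes every vertex have exactly one neighbour of its own colour, the
monochromatic edges form a perfect matching `M`. With more than four vertices some colour class
has three vertices, so it meets two edges of `M`; an edge of `Hgraph` joining these is
monochromatic, hence in `M`, which is impossible in a matching.
-/

/-- The graph H obtained from K_{3,3} (parts {0,1,2} and {3,4,5}) by subdividing the
two adjacent edges 0-3 and 0-4 with new vertices 6 and 7 and adding the handle 6-7;
this is the non-Wagner cubic graph obtained from K_{3,3} by adding a handle. -/
def Hgraph : SimpleGraph (Fin 8) :=
  SimpleGraph.fromRel (fun a b =>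
    (a, b) ∈ ([(0, 5), (0, 6), (0, 7), (1, 3), (1, 4), (1, 5), (2, 3), (2, 4),
      (2, 5), (3, 6), (4, 7), (6, 7)] : List (Fin 8 × Fin 8)))

open Function Equiv

theorem exists_apply_eq_ne_ne_of_four_lt_card {V : Type*} [Fintype V] (hV : 4 < Fintype.card V)
    (c : V → Bool) (g : V → V) : ∃ u x, c x = c u ∧ x ≠ u ∧ x ≠ g u := by
  classical
  obtain ⟨b, hb⟩ := Fintype.exists_lt_card_fiber_of_mul_lt_card c (n := 2) (by simpa using hV)
  obtain ⟨u, hu, v, hv, w, hw, huv, huw, hvw⟩ := Finset.two_lt_card.mp hb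
  simp only [Finset.mem_filter, Finset.mem_univ, true_and] at hu hv hw
  by_cases hvg : v = g u
  · exact ⟨u, w, hw.trans hu.symm, huw.symm, fun hwg => hvw (hvg.trans hwg.symm)⟩
  · exact ⟨u, v, hv.trans hu.symm, huv.symm, hvg⟩

namespace SimpleGraph

variable {V W : Type*} {G : SimpleGraph V} {G' : SimpleGraph W}

namespace Subgraph

def EdgesPairwiseJoined (M : G.Subgraph) : Prop :=
  ∀ a b x y, M.Adj a b → M.Adj x y → s(a, b) ≠ s(x, y) →
    G.Adj a x ∨ G.Adj a y ∨ G.Adj b x ∨ G.Adj b y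

theorem IsPerfectMatching.exists_involutive {M : G.Subgraph} (hM : M.IsPerfectMatching) :
    ∃ f : V → V, Involutive f ∧ ∀ a b, M.Adj a b ↔ b = f a := by
  choose f hf hu using isPerfectMatching_iff.mp hM
  refine ⟨f, fun v => (hu (f v) v (hf v).symm).symm, fun a b => ⟨hu a b, ?_⟩⟩
  rintro rfl
  exact hf a

theorem IsPerfectMatching.eq_of_le {M M' : G.Subgraph} (hM : M.IsPerfectMatching)
    (hM' : M'.IsMatching) (h : M ≤ M') : M = M' := by
  refine le_antisymm h ⟨fun v _ => hM.2 v, fun a b hab => ?_⟩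
  obtain ⟨c, hac, -⟩ := isPerfectMatching_iff.mp hM a
  rwa [hM'.eq_of_adj_left hab (h.2 hac)]

theorem IsMatching.sym2_eq_of_adj {M : G.Subgraph} (hM : M.IsMatching) {a b x y : V}
    (hab : M.Adj a b) (hxy : M.Adj x y) (h : M.Adj a x ∨ M.Adj a y ∨ M.Adj b x ∨ M.Adj b y) :
    s(a, b) = s(x, y) := by
  rcases h with h | h | h | h
  · obtain rfl := hM.eq_of_adj_left hab h
    obtain rfl := hM.eq_of_adj_left hxy hab.symm
    exact Sym2.eq_swap
  · obtain rfl := hM.eq_of_adj_left hab h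
    obtain rfl := hM.eq_of_adj_right hxy hab
    rfl
  · obtain rfl := hM.eq_of_adj_left hab.symm h
    obtain rfl := hM.eq_of_adj_left hxy hab
    rfl
  · obtain rfl := hM.eq_of_adj_left hab.symm h
    obtain rfl := hM.eq_of_adj_right hxy hab.symm
    exact Sym2.eq_swap

end Subgraph

open Subgraph

theorem Iso.map_eq_of_adj (φ : G ≃g G') {M : G.Subgraph} {M' : G'.Subgraph}
    (hM : M.IsPerfectMatching) (hM' : M'.IsMatching)
    (h : ∀ a b, M.Adj a b → M'.Adj (φ a) (φ b)) : M.map φ.toHom = M' := by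
  refine IsPerfectMatching.eq_of_le ⟨(Iso.isMatching_map φ).mpr hM.1, fun v => ?_⟩ hM' ⟨?_, ?_⟩
  · exact ⟨φ.symm v, hM.2 _, φ.apply_symm_apply v⟩
  · rintro _ ⟨x, -, rfl⟩
    obtain ⟨y, hxy, -⟩ := isPerfectMatching_iff.mp hM x
    exact (h x y hxy).fst_mem
  · rintro _ _ ⟨x, y, hxy, rfl, rfl⟩
    exact h x y hxy

def monochromaticSubgraph {α : Type*} (G : SimpleGraph V) (c : V → α) : G.Subgraph where
  verts := Set.univ
  Adj v w := G.Adj v w ∧ c w = c v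
  adj_sub h := h.1
  edge_vert _ := trivial
  symm := ⟨fun _ _ h => ⟨h.1.symm, h.2.symm⟩⟩

theorem not_exists_redBlue_of_edgesPairwiseJoined [Fintype V] (hV : 4 < Fintype.card V)
    (h : ∀ M : G.Subgraph, M.IsPerfectMatching → M.EdgesPairwiseJoined) :
    ¬ ∃ c : V → Bool, ∀ v, ∃! w, G.Adj v w ∧ c w = c v := by
  rintro ⟨c, hc⟩
  have hM : (G.monochromaticSubgraph c).IsPerfectMatching := isPerfectMatching_iff.mpr hc
  choose g hg using fun v => (hc v).exists
  obtain ⟨u, x, hx, hxu, hxg⟩ := exists_apply_eq_ne_ne_of_four_lt_card hV c g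
  have hne : s(u, g u) ≠ s(x, g x) := fun he => by
    rcases Sym2.mem_iff.mp (he ▸ Sym2.mem_mk_left x (g x)) with rfl | rfl <;> contradiction
  have hmono : ∀ a b, G.Adj a b → c a = c u → c b = c u → (G.monochromaticSubgraph c).Adj a b :=
    fun a b hab ha hb => ⟨hab, hb.trans ha.symm⟩
  have hgu : c (g u) = c u := (hg u).2
  have hgx : c (g x) = c u := (hg x).2.trans hx
  refine hne (hM.1.sym2_eq_of_adj (hg u) (hg x) ?_)
  exact (h _ hM u (g u) x (g x) (hg u) (hg x) hne).imp (hmono _ _ · rfl hx)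
    (Or.imp (hmono _ _ · rfl hgx) (Or.imp (hmono _ _ · hgu hx) (hmono _ _ · hgu hgx)))

end SimpleGraph

namespace Hgraph

open SimpleGraph

instance : DecidableRel Hgraph.Adj := fun a b =>
  decidable_of_iff' _ (SimpleGraph.fromRel_adj _ a b)

def autPerm : Fin 6 → Perm (Fin 8) :=
  ![1, swap 1 2, swap 0 7 * swap 4 5, swap 1 2 * (swap 0 7 * swap 4 5),
    swap 1 2 * (swap 0 6 * swap 3 5), swap 0 6 * swap 3 5]

theorem autPerm_adj_iff : ∀ i a b, Hgraph.Adj (autPerm i a) (autPerm i b) ↔ Hgraph.Adj a b := by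
  decide

def aut (i : Fin 6) : Hgraph ≃g Hgraph := ⟨autPerm i, autPerm_adj_iff i _ _⟩

def basePartner : Perm (Fin 8) := swap 0 5 * swap 1 3 * swap 2 4 * swap 6 7

def partner (i : Fin 6) (v : Fin 8) : Fin 8 := aut i (basePartner ((aut i).symm v))

def neighbors : Fin 8 → List (Fin 8) :=
  ![[5, 6, 7], [3, 4, 5], [3, 4, 5], [1, 2, 6], [1, 2, 7], [0, 1, 2], [0, 3, 7], [0, 4, 6]]

theorem mem_neighbors_of_adj : ∀ {v w}, Hgraph.Adj v w → w ∈ neighbors v := by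
  decide

set_option synthInstance.maxSize 1024 in
theorem involutive_vector_eq_partner : ∀ x0 ∈ neighbors 0, ∀ x1 ∈ neighbors 1,
    ∀ x2 ∈ neighbors 2, ∀ x3 ∈ neighbors 3, ∀ x4 ∈ neighbors 4, ∀ x5 ∈ neighbors 5,
    ∀ x6 ∈ neighbors 6, ∀ x7 ∈ neighbors 7,
    let f : Fin 8 → Fin 8 := ![x0, x1, x2, x3, x4, x5, x6, x7]
    (∀ v, f (f v) = v) → ∃ i, f = partner i := by
  decide +kernel

theorem eq_partner_of_involutive {f : Fin 8 → Fin 8} (hf : Involutive f)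
    (hadj : ∀ v, Hgraph.Adj v (f v)) : ∃ i, f = partner i := by
  have hvec : f = ![f 0, f 1, f 2, f 3, f 4, f 5, f 6, f 7] := by
    ext v; fin_cases v <;> rfl
  rw [hvec] at hf ⊢
  exact involutive_vector_eq_partner _ (mem_neighbors_of_adj (hadj 0))
    _ (mem_neighbors_of_adj (hadj 1)) _ (mem_neighbors_of_adj (hadj 2))
    _ (mem_neighbors_of_adj (hadj 3)) _ (mem_neighbors_of_adj (hadj 4))
    _ (mem_neighbors_of_adj (hadj 5)) _ (mem_neighbors_of_adj (hadj 6))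
    _ (mem_neighbors_of_adj (hadj 7)) hf

theorem exists_partner_of_isPerfectMatching {M : Hgraph.Subgraph} (hM : M.IsPerfectMatching) :
    ∃ i, ∀ a b, M.Adj a b ↔ b = partner i a := by
  obtain ⟨f, hf, hMf⟩ := hM.exists_involutive
  obtain ⟨i, rfl⟩ := eq_partner_of_involutive hf fun v => M.adj_sub ((hMf v (f v)).mpr rfl)
  exact ⟨i, hMf⟩

theorem edgesPairwiseJoined_of_isPerfectMatching {M : Hgraph.Subgraph}
    (hM : M.IsPerfectMatching) : M.EdgesPairwiseJoined := by
  obtain ⟨i, hi⟩ := exists_partner_of_isPerfectMatching hM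
  intro a b x y hab hxy
  rw [hi] at hab hxy
  subst hab hxy
  clear hi
  revert i a x
  decide

theorem exists_iso_map_eq_of_isPerfectMatching {M M' : Hgraph.Subgraph}
    (hM : M.IsPerfectMatching) (hM' : M'.IsPerfectMatching) :
    ∃ φ : Hgraph ≃g Hgraph, M.map φ.toHom = M' := by
  obtain ⟨i, hi⟩ := exists_partner_of_isPerfectMatching hM
  obtain ⟨j, hj⟩ := exists_partner_of_isPerfectMatching hM'
  refine ⟨(aut i).symm.trans (aut j), Iso.map_eq_of_adj _ hM hM'.1 fun a b hab => ?_⟩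
  rw [hi] at hab
  rw [hj, hab]
  simp [partner]

end Hgraph

/-- H has a unique perfect matching up to automorphism, the four edges of any
perfect matching are pairwise joined by an edge of H, and consequently H has no
red-blue induced perfect matching. -/
theorem Hgraph_unique_pm_no_induced_pm :
    (∀ M M' : Hgraph.Subgraph, M.IsPerfectMatching → M'.IsPerfectMatching →
      ∃ φ : Hgraph ≃g Hgraph, M.map φ.toHom = M') ∧
    (∀ M : Hgraph.Subgraph, M.IsPerfectMatching →
      ∀ a b x y : Fin 8, M.Adj a b → M.Adj x y → s(a, b) ≠ s(x, y) →
        (Hgraph.Adj a x ∨ Hgraph.Adj a y ∨ Hgraph.Adj b x ∨ Hgraph.Adj b y)) ∧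
    ¬ ∃ c : Fin 8 → Bool, ∀ v, ∃! w, Hgraph.Adj v w ∧ c w = c v :=
  ⟨fun _ _ => Hgraph.exists_iso_map_eq_of_isPerfectMatching,
    fun _ => Hgraph.edgesPairwiseJoined_of_isPerfectMatching,
    SimpleGraph.not_exists_redBlue_of_edgesPairwiseJoined (by simp) fun _ =>
      Hgraph.edgesPairwiseJoined_of_isPerfectMatching⟩
end

section
/- For every even integer k ≥ 2, the generalized Petersen graph GP(4k, 2k-1) admits a red-blue induced perfect matching: a 2-coloring of the vertices in which every vertex has exactly one neighbor of its own color. -/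
/-- For every even k ≥ 2, GP(4k, 2k-1) has a red-blue induced perfect matching. -/
theorem GP_even_induced_pm (k : ℕ) (hk : 2 ≤ k) (hke : k % 2 = 0) :
    ∃ c : Bool × ZMod (4 * k) → Bool,
      ∀ v, ∃! w, (GP (4 * k) (2 * k - 1)).Adj v w ∧ c w = c v := by
  have h4 : (4:ℕ) ∣ 4 * k := ⟨k, rfl⟩
  obtain ⟨χ, hs⟩ : ∃ χ : ZMod (4*k) →+* ZMod 4,
      χ ((2*k - 1 : ℕ) : ZMod (4*k)) = 3 := by
    refine ⟨ZMod.castHom h4 (ZMod 4), ?_⟩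
    obtain ⟨m, hm, rfl⟩ : ∃ m, 1 ≤ m ∧ k = 2*m := ⟨k/2, by omega, by omega⟩
    have h1 : 2*(2*m) - 1 = 4*(m-1) + 3 := by omega
    rw [map_natCast, h1]
    push_cast
    have h2 : (4 : ZMod 4) = 0 := by decide
    rw [h2]; ring
  refine ⟨fun p => p.1 != decide (χ p.2 = 0 ∨ χ p.2 = 1), ?_⟩
  rintro ⟨b, i⟩
  have e1 : χ (i + 1) = χ i + 1 := by rw [map_add, map_one]
  have e2 : χ (i - 1) = χ i - 1 := by rw [map_sub, map_one]
  have e3 : χ (i + ((2*k - 1 : ℕ) : ZMod (4*k))) = χ i + 3 := by rw [map_add, hs]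
  have e4 : χ (i - ((2*k - 1 : ℕ) : ZMod (4*k))) = χ i - 3 := by rw [map_sub, hs]
  simp only [GP, SimpleGraph.fromRel_adj, ExistsUnique]
  match b with
  | false =>
    obtain h | h : (χ i = 0 ∨ χ i = 2) ∨ (χ i = 1 ∨ χ i = 3) := by
      rcases (by decide : ∀ x : ZMod 4, x = 0 ∨ x = 1 ∨ x = 2 ∨ x = 3) (χ i)
        with h|h|h|h <;> tauto
    · -- witness (false, i+1)
      refine ⟨(false, i+1), ⟨⟨?_, Or.inl (Or.inl ⟨rfl, rfl, rfl⟩)⟩, ?_⟩, ?_⟩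
      · intro hc
        have h5 : χ i = χ (i+1) := congrArg (fun p => χ p.2) hc
        rw [e1] at h5
        rcases h with h|h <;> rw [h] at h5 <;> exact absurd h5 (by decide)
      · show (false != decide (χ (i+1) = 0 ∨ χ (i+1) = 1))
            = (false != decide (χ i = 0 ∨ χ i = 1))
        rcases h with h|h <;> rw [e1, h] <;> decide
      · rintro ⟨b', j⟩ ⟨⟨hne, hrel⟩, hcol⟩
        rcases hrel with (⟨-, hb, hj⟩ | ⟨-, hb, hj⟩ | ⟨hb, -, -⟩) |
          (⟨hb, -, hj⟩ | ⟨-, hf, -⟩ | ⟨-, hf, -⟩)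
        · have hb2 : b' = false := hb; subst hb2
          have hj2 : j = i + 1 := hj; subst hj2; rfl
        · have hb2 : b' = true := hb; subst hb2
          have hj2 : i = j := hj; subst hj2
          replace hcol : (true != decide (χ i = 0 ∨ χ i = 1))
              = (false != decide (χ i = 0 ∨ χ i = 1)) := hcol
          by_cases hP : χ i = 0 ∨ χ i = 1 <;> simp [hP] at hcol
        · exact absurd (show false = true from hb) (by decide)
        · have hb2 : b' = false := hb; subst hb2
          have hj2 : j = i - 1 := by
            have := (show i = j + 1 from hj); rw [this]; ring
          subst hj2
          replace hcol : (false != decide (χ (i-1) = 0 ∨ χ (i-1) = 1))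
              = (false != decide (χ i = 0 ∨ χ i = 1)) := hcol
          rw [e2] at hcol
          rcases h with h|h <;> rw [h] at hcol <;> exact absurd hcol (by decide)
        · exact absurd (show false = true from hf) (by decide)
        · exact absurd (show false = true from hf) (by decide)
    · -- witness (false, i-1)
      refine ⟨(false, i-1), ⟨⟨?_, Or.inr (Or.inl ⟨rfl, rfl, by ring⟩)⟩, ?_⟩, ?_⟩
      · intro hc
        have h5 : χ i = χ (i-1) := congrArg (fun p => χ p.2) hc
        rw [e2] at h5
        rcases h with h|h <;> rw [h] at h5 <;> exact absurd h5 (by decide)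
      · show (false != decide (χ (i-1) = 0 ∨ χ (i-1) = 1))
            = (false != decide (χ i = 0 ∨ χ i = 1))
        rcases h with h|h <;> rw [e2, h] <;> decide
      · rintro ⟨b', j⟩ ⟨⟨hne, hrel⟩, hcol⟩
        rcases hrel with (⟨-, hb, hj⟩ | ⟨-, hb, hj⟩ | ⟨hb, -, -⟩) |
          (⟨hb, -, hj⟩ | ⟨-, hf, -⟩ | ⟨-, hf, -⟩)
        · have hb2 : b' = false := hb; subst hb2
          have hj2 : j = i + 1 := hj; subst hj2
          replace hcol : (false != decide (χ (i+1) = 0 ∨ χ (i+1) = 1))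
              = (false != decide (χ i = 0 ∨ χ i = 1)) := hcol
          rw [e1] at hcol
          rcases h with h|h <;> rw [h] at hcol <;> exact absurd hcol (by decide)
        · have hb2 : b' = true := hb; subst hb2
          have hj2 : i = j := hj; subst hj2
          replace hcol : (true != decide (χ i = 0 ∨ χ i = 1))
              = (false != decide (χ i = 0 ∨ χ i = 1)) := hcol
          by_cases hP : χ i = 0 ∨ χ i = 1 <;> simp [hP] at hcol
        · exact absurd (show false = true from hb) (by decide)
        · have hb2 : b' = false := hb; subst hb2
          have hj2 : j = i - 1 := by
            have := (show i = j + 1 from hj); rw [this]; ring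
          subst hj2; rfl
        · exact absurd (show false = true from hf) (by decide)
        · exact absurd (show false = true from hf) (by decide)
  | true =>
    obtain h | h : (χ i = 1 ∨ χ i = 3) ∨ (χ i = 0 ∨ χ i = 2) := by
      rcases (by decide : ∀ x : ZMod 4, x = 0 ∨ x = 1 ∨ x = 2 ∨ x = 3) (χ i)
        with h|h|h|h <;> tauto
    · -- witness (true, i+s)
      refine ⟨(true, i + ((2*k - 1 : ℕ) : ZMod (4*k))),
        ⟨⟨?_, Or.inl (Or.inr (Or.inr ⟨rfl, rfl, rfl⟩))⟩, ?_⟩, ?_⟩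
      · intro hc
        have h5 : χ i = χ (i + ((2*k - 1 : ℕ) : ZMod (4*k))) :=
          congrArg (fun p => χ p.2) hc
        rw [e3] at h5
        rcases h with h|h <;> rw [h] at h5 <;> exact absurd h5 (by decide)
      · show (true != decide (χ (i + ((2*k - 1 : ℕ) : ZMod (4*k))) = 0
              ∨ χ (i + ((2*k - 1 : ℕ) : ZMod (4*k))) = 1))
            = (true != decide (χ i = 0 ∨ χ i = 1))
        rcases h with h|h <;> rw [e3, h] <;> decide
      · rintro ⟨b', j⟩ ⟨⟨hne, hrel⟩, hcol⟩
        rcases hrel with (⟨hf, -, -⟩ | ⟨hf, -, -⟩ | ⟨-, hb, hj⟩) |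
          (⟨-, hf, -⟩ | ⟨hb, -, hj⟩ | ⟨hb, -, hj⟩)
        · exact absurd (show true = false from hf) (by decide)
        · exact absurd (show true = false from hf) (by decide)
        · have hb2 : b' = true := hb; subst hb2
          have hj2 : j = i + ((2*k - 1 : ℕ) : ZMod (4*k)) := hj; subst hj2; rfl
        · exact absurd (show true = false from hf) (by decide)
        · have hb2 : b' = false := hb; subst hb2
          have hj2 : i = j := (show j = i from hj).symm; subst hj2
          replace hcol : (false != decide (χ i = 0 ∨ χ i = 1))
              = (true != decide (χ i = 0 ∨ χ i = 1)) := hcol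
          by_cases hP : χ i = 0 ∨ χ i = 1 <;> simp [hP] at hcol
        · have hb2 : b' = true := hb; subst hb2
          have hj2 : j = i - ((2*k - 1 : ℕ) : ZMod (4*k)) := by
            have := (show i = j + ((2*k - 1 : ℕ) : ZMod (4*k)) from hj)
            rw [this]; ring
          subst hj2
          replace hcol : (true != decide (χ (i - ((2*k - 1 : ℕ) : ZMod (4*k))) = 0
              ∨ χ (i - ((2*k - 1 : ℕ) : ZMod (4*k))) = 1))
              = (true != decide (χ i = 0 ∨ χ i = 1)) := hcol
          rw [e4] at hcol
          rcases h with h|h <;> rw [h] at hcol <;> exact absurd hcol (by decide)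
    · -- witness (true, i-s)
      refine ⟨(true, i - ((2*k - 1 : ℕ) : ZMod (4*k))),
        ⟨⟨?_, Or.inr (Or.inr (Or.inr ⟨rfl, rfl, by ring⟩))⟩, ?_⟩, ?_⟩
      · intro hc
        have h5 : χ i = χ (i - ((2*k - 1 : ℕ) : ZMod (4*k))) :=
          congrArg (fun p => χ p.2) hc
        rw [e4] at h5
        rcases h with h|h <;> rw [h] at h5 <;> exact absurd h5 (by decide)
      · show (true != decide (χ (i - ((2*k - 1 : ℕ) : ZMod (4*k))) = 0
              ∨ χ (i - ((2*k - 1 : ℕ) : ZMod (4*k))) = 1))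
            = (true != decide (χ i = 0 ∨ χ i = 1))
        rcases h with h|h <;> rw [e4, h] <;> decide
      · rintro ⟨b', j⟩ ⟨⟨hne, hrel⟩, hcol⟩
        rcases hrel with (⟨hf, -, -⟩ | ⟨hf, -, -⟩ | ⟨-, hb, hj⟩) |
          (⟨-, hf, -⟩ | ⟨hb, -, hj⟩ | ⟨hb, -, hj⟩)
        · exact absurd (show true = false from hf) (by decide)
        · exact absurd (show true = false from hf) (by decide)
        · have hb2 : b' = true := hb; subst hb2
          have hj2 : j = i + ((2*k - 1 : ℕ) : ZMod (4*k)) := hj; subst hj2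
          replace hcol : (true != decide (χ (i + ((2*k - 1 : ℕ) : ZMod (4*k))) = 0
              ∨ χ (i + ((2*k - 1 : ℕ) : ZMod (4*k))) = 1))
              = (true != decide (χ i = 0 ∨ χ i = 1)) := hcol
          rw [e3] at hcol
          rcases h with h|h <;> rw [h] at hcol <;> exact absurd hcol (by decide)
        · exact absurd (show true = false from hf) (by decide)
        · have hb2 : b' = false := hb; subst hb2
          have hj2 : i = j := (show j = i from hj).symm; subst hj2
          replace hcol : (false != decide (χ i = 0 ∨ χ i = 1))
              = (true != decide (χ i = 0 ∨ χ i = 1)) := hcol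
          by_cases hP : χ i = 0 ∨ χ i = 1 <;> simp [hP] at hcol
        · have hb2 : b' = true := hb; subst hb2
          have hj2 : j = i - ((2*k - 1 : ℕ) : ZMod (4*k)) := by
            have := (show i = j + ((2*k - 1 : ℕ) : ZMod (4*k)) from hj)
            rw [this]; ring
          subst hj2; rfl
end
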